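/- arXiv:2402.10339 — 3 statements merged into one kernel-verified Lean document; each statement's English description precedes it below -/
import Mathlib

section
/- A twice continuously differentiable function f : ℝ^d → ℝ has all diagonal Hessian entries identically zero (∂²f/∂x_i² ≡ 0 for all i) if and only if f can be written as a multilinear polynomial f(x) = ∑_{S ⊆ {1,…,d}} w_S ∏_{i ∈ S} x_i for some real coefficients w_S. -/
/-!
On the line `s ↦ x + s • v`, the second derivative of `f` is `s ↦ D(D f · v)(x + s • v) v`,
so for a `C²` function the vanishing of all `∂ᵢ²f` means exactly that `f` is affine in each
coordinate separately. Such a function is the multilinear interpolation of its values at the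
vertices of the unit cube, `f x = ∑_T (∏_{i ∈ T} xᵢ ∏_{i ∉ T} (1 - xᵢ)) f(1_T)`, and expanding
the products turns this into a multilinear polynomial. Conversely every monomial is affine in
each coordinate.
-/

open Finset Function

section AffineAlong

variable {E F : Type*} [NormedAddCommGroup E] [NormedSpace ℝ E]
  [NormedAddCommGroup F] [NormedSpace ℝ F]

def AffineAlong (f : E → F) (v : E) : Prop :=
  ∀ x, ∃ c : F, ∀ t : ℝ, f (x + t • v) = f x + t • c

theorem hasDerivAt_comp_add_smul {g : E → F} {x v : E} {t : ℝ}
    (hg : DifferentiableAt ℝ g (x + t • v)) :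
    HasDerivAt (fun s : ℝ => g (x + s • v)) (fderiv ℝ g (x + t • v) v) t := by
  have hline : HasDerivAt (fun s : ℝ => x + s • v) v t := by
    simpa using ((hasDerivAt_id t).smul_const v).const_add x
  exact hg.hasFDerivAt.comp_hasDerivAt t hline

theorem eq_add_smul_of_forall_hasDerivAt {g : ℝ → F} {c : F} (hg : ∀ t, HasDerivAt g c t)
    (t : ℝ) : g t = g 0 + t • c := by
  have hzero : ∀ s, HasDerivAt (fun s => g s - s • c) 0 s := fun s => by
    simpa using (hg s).fun_sub ((hasDerivAt_id s).smul_const c)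
  have := is_const_of_deriv_eq_zero (fun s => (hzero s).differentiableAt)
    (fun s => (hzero s).deriv) t 0
  simp only [zero_smul, sub_zero] at this
  rw [← this, sub_add_cancel]

theorem ContDiff.fderiv_fderiv_apply_eq_zero_iff_affineAlong {f : E → F}
    (hf : ContDiff ℝ 2 f) (v : E) :
    (∀ x, fderiv ℝ (fun y => fderiv ℝ f y v) x v = 0) ↔ AffineAlong f v := by
  have hdf : Differentiable ℝ f := hf.differentiable (by norm_num)
  have hdf' : Differentiable ℝ (fun y => fderiv ℝ f y v) :=
    ((hf.fderiv_right (m := 1) (by norm_num)).differentiable one_ne_zero).clm_apply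
      (differentiable_const v)
  constructor
  · intro h x
    have hslope : ∀ s : ℝ, fderiv ℝ f (x + s • v) v = fderiv ℝ f x v := by
      have hderiv : ∀ s : ℝ, HasDerivAt (fun s : ℝ => fderiv ℝ f (x + s • v) v) 0 s :=
        fun s => by simpa only [h] using hasDerivAt_comp_add_smul (x := x) (hdf' (x + s • v))
      simpa using eq_add_smul_of_forall_hasDerivAt hderiv
    have hderiv : ∀ s : ℝ, HasDerivAt (fun s : ℝ => f (x + s • v)) (fderiv ℝ f x v) s :=
      fun s => hslope s ▸ hasDerivAt_comp_add_smul (hdf _)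
    exact ⟨fderiv ℝ f x v, fun t => by simpa using eq_add_smul_of_forall_hasDerivAt hderiv t⟩
  · intro h x
    obtain ⟨c, hc⟩ := h x
    have hslope : ∀ s : ℝ, fderiv ℝ f (x + s • v) v = c := fun s => by
      have hline : HasDerivAt (fun t : ℝ => f (x + s • v + t • v)) c 0 := by
        simp_rw [add_assoc, ← add_smul, hc]
        simpa using (((hasDerivAt_id (0 : ℝ)).const_add s).smul_const c).const_add (f x)
      simpa using (hasDerivAt_comp_add_smul (t := 0) (hdf _)).unique hline
    have hderiv := hasDerivAt_comp_add_smul (x := x) (v := v) (t := 0) (hdf' _)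
    simp only [hslope, zero_smul, add_zero] at hderiv
    exact hderiv.unique (hasDerivAt_const 0 c)

end AffineAlong

theorem Finset.prod_add_mul_eq_sum_powerset {ι R : Type*} [Fintype ι] [DecidableEq ι]
    [CommSemiring R] (a b x : ι → R) :
    ∏ i, (a i + b i * x i) = ∑ S : Finset ι, ((∏ i ∈ S, b i) * ∏ i ∈ Sᶜ, a i) * ∏ i ∈ S, x i := by
  simp_rw [add_comm (a _), prod_add, powerset_univ, ← compl_eq_univ_sdiff, prod_mul_distrib]
  exact sum_congr rfl fun S _ => by ring

section Multilinear

variable {ι : Type*} [DecidableEq ι]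

theorem add_smul_single_one (x : ι → ℝ) (i : ι) (t : ℝ) :
    x + t • Pi.single i 1 = update x i (x i + t) := by
  ext j
  by_cases h : j = i
  · subst h; simp
  · simp [h]

theorem prod_eq_lerp_update (S : Finset ι) (x : ι → ℝ) (i : ι) :
    ∏ j ∈ S, x j = (1 - x i) * ∏ j ∈ S, update x i 0 j + x i * ∏ j ∈ S, update x i 1 j := by
  by_cases hi : i ∈ S
  · rw [prod_update_of_mem hi, prod_update_of_mem hi, prod_eq_mul_prod_sdiff_singleton_of_mem hi]
    ring
  · rw [prod_update_of_notMem hi, prod_update_of_notMem hi]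
    ring

theorem eq_sum_powerset_mul_vertex {f : (ι → ℝ) → ℝ}
    (hf : ∀ i x, f x = (1 - x i) * f (update x i 0) + x i * f (update x i 1))
    (A : Finset ι) (x : ι → ℝ) :
    f x = ∑ T ∈ A.powerset, (∏ i ∈ A, if i ∈ T then x i else 1 - x i) *
      f (A.piecewise (T.piecewise (1 : ι → ℝ) 0) x) := by
  induction A using Finset.induction_on with
  | empty => simp
  | @insert a A ha ih =>
    rw [sum_powerset_insert ha, ← sum_add_distrib, ih]
    refine sum_congr rfl fun T hT => ?_
    have haT : a ∉ T := fun h => ha (mem_powerset.1 hT h)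
    set y := A.piecewise (T.piecewise (1 : ι → ℝ) 0) x
    have hya : y a = x a := piecewise_eq_of_notMem _ _ _ ha
    have h0 : (insert a A).piecewise (T.piecewise (1 : ι → ℝ) 0) x = update y a 0 := by
      rw [piecewise_insert, piecewise_eq_of_notMem _ _ _ haT, Pi.zero_apply]
    have h1 : (insert a A).piecewise ((insert a T).piecewise (1 : ι → ℝ) 0) x = update y a 1 := by
      rw [piecewise_insert, piecewise_eq_of_mem _ _ _ (mem_insert_self a T), Pi.one_apply]
      exact congrArg (update · a 1) <| A.piecewise_congr
        (fun i hi => piecewise_insert_of_ne _ _ _ (ne_of_mem_of_not_mem hi ha)) fun _ _ => rfl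
    have hprod : ∏ i ∈ A, (if i ∈ insert a T then x i else 1 - x i) =
        ∏ i ∈ A, if i ∈ T then x i else 1 - x i :=
      prod_congr rfl fun i hi => by simp [ne_of_mem_of_not_mem hi ha]
    rw [prod_insert ha, prod_insert ha, if_neg haT, if_pos (mem_insert_self a T), hprod, h0, h1,
      hf a y, hya]
    ring

end Multilinear

section Coordinates

variable {ι : Type*} [Fintype ι] [DecidableEq ι]

theorem affineAlong_single_one_iff {f : (ι → ℝ) → ℝ} (i : ι) :
    AffineAlong f (Pi.single i 1) ↔
      ∀ x, f x = (1 - x i) * f (update x i 0) + x i * f (update x i 1) := by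
  simp only [AffineAlong, add_smul_single_one, smul_eq_mul]
  constructor
  · intro h x
    obtain ⟨c, hc⟩ := h (update x i 0)
    have hx := hc (x i)
    have h1 := hc 1
    simp only [update_self, zero_add, update_idem, update_eq_self] at hx h1
    rw [hx, h1]
    ring
  · intro h x
    refine ⟨f (update x i 1) - f (update x i 0), fun t => ?_⟩
    rw [h x, h (update x i (x i + t))]
    simp only [update_self, update_idem]
    ring

theorem forall_affineAlong_single_one_iff_exists_multilinear {f : (ι → ℝ) → ℝ} :
    (∀ i, AffineAlong f (Pi.single i 1)) ↔
      ∃ w : Finset ι → ℝ, ∀ x, f x = ∑ S, w S * ∏ i ∈ S, x i := by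
  simp only [affineAlong_single_one_iff]
  constructor
  · intro hf
    refine ⟨fun S => ∑ T : Finset ι, ((∏ i ∈ S, if i ∈ T then (1 : ℝ) else -1) *
      ∏ i ∈ Sᶜ, if i ∈ T then (0 : ℝ) else 1) * f (T.piecewise 1 0), fun x => ?_⟩
    have hvertex : ∀ T : Finset ι, (∏ i, if i ∈ T then x i else 1 - x i) =
        ∏ i, ((if i ∈ T then 0 else 1) + (if i ∈ T then 1 else -1) * x i) :=
      fun T => prod_congr rfl fun i _ => by split_ifs <;> ring
    rw [eq_sum_powerset_mul_vertex hf univ x, powerset_univ]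
    simp_rw [piecewise_univ, hvertex, prod_add_mul_eq_sum_powerset, sum_mul]
    rw [sum_comm]
    exact sum_congr rfl fun S _ => sum_congr rfl fun T _ => by ring
  · rintro ⟨w, hw⟩ i x
    rw [hw, hw, hw]
    simp_rw [prod_eq_lerp_update _ x i, mul_sum, ← sum_add_distrib]
    exact sum_congr rfl fun S _ => by ring

end Coordinates

/-- A twice continuously differentiable `f : ℝ^d → ℝ` has all diagonal Hessian entries
identically zero iff it is a multilinear polynomial `∑_{S ⊆ {1,…,d}} w_S ∏_{i∈S} x_i`. -/
theorem diag_hessian_zero_iff_multilinear (d : ℕ) (f : (Fin d → ℝ) → ℝ)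
    (hf : ContDiff ℝ 2 f) :
    (∀ i : Fin d, ∀ x : Fin d → ℝ,
        fderiv ℝ (fun y => fderiv ℝ f y (Pi.single i 1)) x (Pi.single i 1) = 0)
      ↔ ∃ w : Finset (Fin d) → ℝ, ∀ x, f x = ∑ S : Finset (Fin d), w S * ∏ i ∈ S, x i :=
  (forall_congr' fun i => hf.fderiv_fderiv_apply_eq_zero_iff_affineAlong (Pi.single i 1)).trans
    forall_affineAlong_single_one_iff_exists_multilinear
end

section
/- The LOORF estimator is unbiased: if z^(1),…,z^(n) are i.i.d. from p_θ (a positive differentiable distribution on a finite set, n ≥ 2), then E[(1/(n−1)) ∑_{s=1}^n (J(z^(s)) − (1/n)∑_{s'=1}^n J(z^(s'))) ∇_θ log p_θ(z^(s))] = ∇_θ E_{z~p_θ}[J(z)]. -/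
/-! An expectation over `n` i.i.d. draws from `p` is written as a sum over `f : ι → Z` weighted by
`∏ s, p (f s)`; it factors over coordinates. The score `w = ∂_θ log p_θ` has mean zero
(differentiate `∑ z, p_θ z = 1`), so for `s ≠ s'` the cross term `E[J(z_s') w(z_s)] = E[J] E[w]`
vanishes. Each leave-one-out summand thus contributes `(1 - 1/n) E[J w] = (1 - 1/n) ∂_θ E[J]`, and
`n` of them with the prefactor `1/(n-1)` give exactly `∂_θ E[J]`. -/

open Finset

section ProductExpectation

variable {ι Z R : Type*} [Fintype ι] [DecidableEq ι] [Fintype Z]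

theorem sum_prod_mul_prod [CommSemiring R] (p : Z → R) (h : ι → Z → R) :
    ∑ f : ι → Z, (∏ s, p (f s)) * ∏ s, h s (f s) = ∏ s, ∑ z, p z * h s z := by
  simp only [Fintype.prod_sum, prod_mul_distrib]

theorem sum_prod_mul_apply [CommSemiring R] {p : Z → R} (hp : ∑ z, p z = 1) (h : Z → R) (i : ι) :
    ∑ f : ι → Z, (∏ s, p (f s)) * h (f i) = ∑ z, p z * h z := by
  simpa [Fintype.prod_ite_eq', hp] using
    sum_prod_mul_prod p (fun s z => if s = i then h z else 1)

theorem sum_prod_mul_apply_mul_apply [CommSemiring R] {p : Z → R} (hp : ∑ z, p z = 1)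
    (h₁ h₂ : Z → R) {i j : ι} (hij : i ≠ j) :
    ∑ f : ι → Z, (∏ s, p (f s)) * (h₁ (f i) * h₂ (f j))
      = (∑ z, p z * h₁ z) * ∑ z, p z * h₂ z := by
  have key := sum_prod_mul_prod p (fun s z => if s = i then h₁ z else if s = j then h₂ z else 1)
  rw [Fintype.prod_eq_mul i j hij (by intro s hs; simp [hs.1, hs.2, hp])] at key
  simp only [↓reduceIte, if_neg hij.symm] at key
  rw [← key]
  refine sum_congr rfl fun f _ => congrArg _ ?_
  rw [Fintype.prod_eq_mul i j hij (by intro s hs; simp [hs.1, hs.2])]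
  simp only [↓reduceIte, if_neg hij.symm]

theorem sum_prod_mul_centered_mul_apply [CommRing R] {p : Z → R}
    (hp : ∑ z, p z = 1) (J w : Z → R) (hw : ∑ z, p z * w z = 0) (c : R) (i : ι) :
    ∑ f : ι → Z, (∏ s, p (f s)) * ((J (f i) - c * ∑ s, J (f s)) * w (f i))
      = (1 - c) * ∑ z, p z * (J z * w z) := by
  have cross : ∀ s, ∑ f : ι → Z, (∏ s, p (f s)) * (J (f s) * w (f i))
      = if s = i then ∑ z, p z * (J z * w z) else 0 := by
    intro s
    split_ifs with hs
    · subst hs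
      exact sum_prod_mul_apply hp (fun z => J z * w z) s
    · rw [sum_prod_mul_apply_mul_apply hp J w hs, hw, mul_zero]
  calc ∑ f : ι → Z, (∏ s, p (f s)) * ((J (f i) - c * ∑ s, J (f s)) * w (f i))
      = ∑ f : ι → Z, (∏ s, p (f s)) * (J (f i) * w (f i))
          - c * ∑ s, ∑ f : ι → Z, (∏ s, p (f s)) * (J (f s) * w (f i)) := by
        rw [sum_comm, mul_sum, ← sum_sub_distrib]
        refine sum_congr rfl fun f _ => ?_
        rw [← mul_sum, ← sum_mul]
        ring
    _ = (1 - c) * ∑ z, p z * (J z * w z) := by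
        rw [sum_prod_mul_apply hp (fun z => J z * w z) i]
        simp only [cross, sum_ite_eq', mem_univ, if_true]
        ring

theorem sum_prod_mul_sum_centered_mul_apply [CommRing R] {p : Z → R} (hp : ∑ z, p z = 1)
    (J w : Z → R) (hw : ∑ z, p z * w z = 0) (a c : R) :
    ∑ f : ι → Z, (∏ s, p (f s)) * (a * ∑ i, (J (f i) - c * ∑ s, J (f s)) * w (f i))
      = a * (Fintype.card ι * (1 - c)) * ∑ z, p z * (J z * w z) := by
  simp_rw [mul_sum, mul_left_comm _ a]
  rw [sum_comm]
  simp_rw [← mul_sum, sum_prod_mul_centered_mul_apply hp J w hw c, sum_const, card_univ,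
    nsmul_eq_mul]
  ring

end ProductExpectation

theorem mul_deriv_log {f : ℝ → ℝ} {x : ℝ} (hf : DifferentiableAt ℝ f x) (hx : f x ≠ 0) :
    f x * deriv (fun t => Real.log (f t)) x = deriv f x := by
  rw [deriv.log hf hx, mul_div_cancel₀ _ hx]

theorem sum_deriv_eq_zero_of_sum_const {Z : Type*} [Fintype Z] {p : ℝ → Z → ℝ} {c θ : ℝ}
    (hsum : ∀ t, ∑ z, p t z = c) (hdiff : ∀ z, DifferentiableAt ℝ (fun t => p t z) θ) :
    ∑ z, deriv (fun t => p t z) θ = 0 := by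
  rw [← deriv_fun_sum fun z _ => hdiff z]
  simp [hsum]

/-- The LOORF estimator is unbiased: for i.i.d. samples from a positive differentiable
distribution on a finite set, its expectation equals the gradient of the expected cost. -/
theorem loorf_unbiased {Z : Type*} [Fintype Z] (p : ℝ → Z → ℝ) (θ : ℝ) (J : Z → ℝ)
    (n : ℕ) (hn : 2 ≤ n)
    (hpos : ∀ t z, 0 < p t z) (hsum : ∀ t, ∑ z, p t z = 1)
    (hdiff : ∀ z, Differentiable ℝ (fun t => p t z)) :
    ∑ f : Fin n → Z, (∏ s, p θ (f s)) *
        ((1 / ((n : ℝ) - 1)) * ∑ s, (J (f s) - (1 / (n : ℝ)) * ∑ s', J (f s')) *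
          deriv (fun t => Real.log (p t (f s))) θ)
      = deriv (fun t => ∑ z, p t z * J z) θ := by
  set score : Z → ℝ := fun z => deriv (fun t => Real.log (p t z)) θ
  have hscore (z : Z) : p θ z * score z = deriv (fun t => p t z) θ :=
    mul_deriv_log (hdiff z θ) (hpos θ z).ne'
  have hmean : ∑ z, p θ z * score z = 0 := by
    simp_rw [hscore]
    exact sum_deriv_eq_zero_of_sum_const hsum fun z => hdiff z θ
  have hgrad : deriv (fun t => ∑ z, p t z * J z) θ = ∑ z, p θ z * (J z * score z) := by
    rw [deriv_fun_sum fun z _ => (hdiff z θ).mul_const (J z)]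
    refine sum_congr rfl fun z _ => ?_
    rw [deriv_mul_const (hdiff z θ), ← hscore]
    ring
  have hn' : (2 : ℝ) ≤ n := by exact_mod_cast hn
  have hn1 : (n : ℝ) - 1 ≠ 0 := by linarith
  rw [sum_prod_mul_sum_centered_mul_apply (hsum θ) J score hmean, hgrad, Fintype.card_fin]
  field_simp
end

section
/- For the factorized Bernoulli distribution p_θ(z) = ∏_{i=1}^d θ_i^{z_i}(1−θ_i)^{1−z_i} on {0,1}^d with θ_i ∈ (0,1), the optimal constant baseline for coordinate i equals β_i* = E_{z ~ p_θ}[J(z_1,…,z_{i−1}, 1−z_i, z_{i+1},…,z_d)], i.e., the expectation of J with the i-th coordinate flipped. -/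
/-!
Split off the `i`-th factor of `p_θ(z) = θ_i^{z_i}(1-θ_i)^{1-z_i} C(z_{-i})`. The score is
`1/θ_i` or `-1/(1-θ_i)` according to `z_i`, so `p_θ(z)·score(z)²` is
`C(z_{-i})/θ_i` resp. `C(z_{-i})/(1-θ_i)`, that is `p_θ(flip_i z)/(θ_i(1-θ_i))`.
The tilted measure is therefore the push-forward of `p_θ` under the involution `flip_i`.
-/

open Finset Function

def bernoulliWeight (t : ℝ) (b : Bool) : ℝ := if b then t else 1 - t

/-- `∂/∂t log (bernoulliWeight t b)`. -/
noncomputable def bernoulliScore (t : ℝ) (b : Bool) : ℝ := if b then t⁻¹ else -(1 - t)⁻¹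

theorem bernoulliWeight_ne_zero {t : ℝ} (h0 : t ≠ 0) (h1 : t ≠ 1) (b : Bool) :
    bernoulliWeight t b ≠ 0 := by
  cases b
  · simpa [bernoulliWeight, sub_eq_zero] using h1.symm
  · simpa [bernoulliWeight] using h0

theorem hasDerivAt_bernoulliWeight (t : ℝ) (b : Bool) :
    HasDerivAt (bernoulliWeight · b) (if b then 1 else -1) t := by
  cases b
  · simpa [bernoulliWeight] using (hasDerivAt_id t).const_sub 1
  · simpa [bernoulliWeight] using hasDerivAt_id' t

theorem bernoulliWeight_mul_bernoulliScore_sq {t : ℝ} (h0 : t ≠ 0) (h1 : t ≠ 1) (b : Bool) :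
    bernoulliWeight t b * bernoulliScore t b ^ 2 = (t * (1 - t))⁻¹ * bernoulliWeight t (!b) := by
  have h1' : 1 - t ≠ 0 := sub_ne_zero.mpr h1.symm
  cases b <;> simp [bernoulliWeight, bernoulliScore] <;> field_simp

variable {ι : Type*}

section
variable [DecidableEq ι]

def flipAt (i : ι) (z : ι → Bool) : ι → Bool := update z i (!z i)

@[simp]
theorem flipAt_flipAt (i : ι) (z : ι → Bool) : flipAt i (flipAt i z) = z := by
  ext j
  rcases eq_or_ne j i with rfl | hj
  · simp [flipAt]
  · simp [flipAt, update_of_ne hj]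

theorem flipAt_involutive (i : ι) : Involutive (flipAt i) := flipAt_flipAt i

end

section
variable [Fintype ι] [DecidableEq ι]

def bernoulliProd (θ : ι → ℝ) (z : ι → Bool) : ℝ := ∏ j, bernoulliWeight (θ j) (z j)

theorem sum_bernoulliProd (θ : ι → ℝ) : ∑ z, bernoulliProd θ z = 1 := by
  simp only [bernoulliProd]
  rw [← Fintype.prod_sum]
  simp [bernoulliWeight]

theorem bernoulliProd_update_update (θ : ι → ℝ) (z : ι → Bool) (i : ι) (t : ℝ) (b : Bool) :
    bernoulliProd (update θ i t) (update z i b)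
      = bernoulliWeight t b * ∏ j ∈ univ.erase i, bernoulliWeight (θ j) (z j) := by
  rw [bernoulliProd, ← mul_prod_erase _ _ (mem_univ i)]
  congr 1
  · simp
  · refine prod_congr rfl fun j hj => ?_
    rw [update_of_ne (ne_of_mem_erase hj), update_of_ne (ne_of_mem_erase hj)]

theorem deriv_log_bernoulliProd_update {θ : ι → ℝ} (h0 : ∀ j, θ j ≠ 0) (h1 : ∀ j, θ j ≠ 1)
    (i : ι) (z : ι → Bool) :
    deriv (fun t => Real.log (bernoulliProd (update θ i t) z)) (θ i)
      = bernoulliScore (θ i) (z i) := by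
  set C := ∏ j ∈ univ.erase i, bernoulliWeight (θ j) (z j)
  have hC : C ≠ 0 := prod_ne_zero_iff.mpr fun j _ => bernoulliWeight_ne_zero (h0 j) (h1 j) _
  have hsplit : ∀ t, bernoulliProd (update θ i t) z = bernoulliWeight t (z i) * C := fun t => by
    simpa using bernoulliProd_update_update θ z i t (z i)
  simp only [hsplit]
  rw [(((hasDerivAt_bernoulliWeight (θ i) (z i)).mul_const C).log
    (mul_ne_zero (bernoulliWeight_ne_zero (h0 i) (h1 i) _) hC)).deriv]
  have h1' : 1 - θ i ≠ 0 := sub_ne_zero.mpr (h1 i).symm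
  cases z i <;> simp [bernoulliWeight, bernoulliScore] <;> field_simp

theorem bernoulliProd_mul_bernoulliScore_sq {θ : ι → ℝ} {i : ι} (h0 : θ i ≠ 0) (h1 : θ i ≠ 1)
    (z : ι → Bool) :
    bernoulliProd θ z * bernoulliScore (θ i) (z i) ^ 2
      = (θ i * (1 - θ i))⁻¹ * bernoulliProd θ (flipAt i z) := by
  have hsplit := bernoulliProd_update_update θ z i (θ i)
  simp only [update_eq_self] at hsplit
  have hz := hsplit (z i)
  rw [update_eq_self] at hz
  rw [hz, flipAt, hsplit, mul_right_comm, bernoulliWeight_mul_bernoulliScore_sq h0 h1, mul_assoc]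

theorem sum_bernoulliProd_mul_bernoulliScore_sq_mul {θ : ι → ℝ} {i : ι} (h0 : θ i ≠ 0)
    (h1 : θ i ≠ 1) (g : (ι → Bool) → ℝ) :
    ∑ z, bernoulliProd θ z * bernoulliScore (θ i) (z i) ^ 2 * g z
      = (θ i * (1 - θ i))⁻¹ * ∑ z, bernoulliProd θ z * g (flipAt i z) := by
  simp only [bernoulliProd_mul_bernoulliScore_sq h0 h1, mul_assoc, ← mul_sum]
  rw [← Equiv.sum_comp (flipAt_involutive i).toPerm fun z => bernoulliProd θ z * g (flipAt i z)]
  simp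

end

/-- For the factorized Bernoulli distribution on `{0,1}^d` with parameters `θᵢ ∈ (0,1)`,
the optimal constant baseline for coordinate `i`, i.e. the expectation of `J` under the
distribution tilted by the squared score `q_i(z) ∝ p_θ(z)(∂ log p_θ(z)/∂θ_i)²`, equals the
expectation of `J` with the `i`-th coordinate flipped. -/
theorem bernoulli_optimal_baseline_eq_flip (d : ℕ) (θ : Fin d → ℝ)
    (hθ : ∀ j, θ j ∈ Set.Ioo (0 : ℝ) 1) (i : Fin d) (J : (Fin d → Bool) → ℝ) :
    let P : (Fin d → ℝ) → (Fin d → Bool) → ℝ := fun t z => ∏ j, if z j then t j else 1 - t j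
    let score : (Fin d → Bool) → ℝ :=
      fun z => deriv (fun t => Real.log (P (Function.update θ i t) z)) (θ i)
    (∑ z : Fin d → Bool, P θ z * (score z) ^ 2 * J z)
        / (∑ z : Fin d → Bool, P θ z * (score z) ^ 2)
      = ∑ z : Fin d → Bool, P θ z * J (Function.update z i (!z i)) := by
  intro P score
  have h0 : ∀ j, θ j ≠ 0 := fun j => (hθ j).1.ne'
  have h1 : ∀ j, θ j ≠ 1 := fun j => (hθ j).2.ne
  have hscore (z) : score z = bernoulliScore (θ i) (z i) := deriv_log_bernoulliProd_update h0 h1 i z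
  have hden := sum_bernoulliProd_mul_bernoulliScore_sq_mul (h0 i) (h1 i) 1
  simp only [Pi.one_apply, mul_one, sum_bernoulliProd] at hden
  change (∑ z, bernoulliProd θ z * score z ^ 2 * J z) / (∑ z, bernoulliProd θ z * score z ^ 2)
    = ∑ z, bernoulliProd θ z * J (flipAt i z)
  simp only [hscore, hden, sum_bernoulliProd_mul_bernoulliScore_sq_mul (h0 i) (h1 i)]
  have hk : θ i * (1 - θ i) ≠ 0 := mul_ne_zero (h0 i) (sub_ne_zero.mpr (h1 i).symm)
  exact mul_div_cancel_left₀ _ (inv_ne_zero hk)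
end
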